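/- In a t-ary fat-tree, for any two distinct servers there exists a path between them through the switches; moreover, if they lie under the same edge switch the shortest path has length 2, if in the same pod but different edges length 4, and if in different pods length 6. -/

import Mathlib

/-- Vertices of the `t`-ary fat-tree with `m = t/2`: cores `Fin (m*m)`,
aggregations and edges `Fin t × Fin m` (pod, index), servers
`Fin t × Fin m × Fin m` (pod, edge, position). -/
inductive FatTreeVertex (t m : ℕ) where
  | core : Fin (m * m) → FatTreeVertex t m
  | agg : Fin t → Fin m → FatTreeVertex t m
  | edge : Fin t → Fin m → FatTreeVertex t m
  | server : Fin t → Fin m → Fin m → FatTreeVertex t m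
  deriving DecidableEq

/-- One-directional (top-down) link relation of the fat-tree: core `c` links to
aggregation `a_{i,j}` iff `c / m = j`; aggregation `a_{i,j}` links to every edge in
pod `i`; edge `e_{i,p}` links to server `w_{i,p,s}`. -/
def fatTreeLink (t m : ℕ) : FatTreeVertex t m → FatTreeVertex t m → Prop
  | .core c, .agg _ j => (c : ℕ) / m = (j : ℕ)
  | .agg i _, .edge i' _ => i = i'
  | .edge i p, .server i' p' _ => i = i' ∧ p = p'
  | _, _ => False

/-- The fat-tree graph: two vertices are adjacent iff one links to the other. -/
def fatTreeGraph (t m : ℕ) : SimpleGraph (FatTreeVertex t m) where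
  Adj u v := fatTreeLink t m u v ∨ fatTreeLink t m v u
  symm := by constructor; intro u v h; exact h.symm
  loopless := by
    constructor
    intro v h
    cases v <;> simp only [fatTreeLink] at h <;> exact h.elim id id

/-
`distFromServer i p s` is the hop count from `w_{i,p,s}`: up to its edge switch, then to an
aggregation switch of its pod, then to a core switch, and back down. It vanishes at `w_{i,p,s}`
and grows by at most one along every link, so it bounds the graph distance from below; walks
through a common edge, aggregation or core switch attain it.
-/

namespace SimpleGraph

variable {V : Type*} {G : SimpleGraph V}

lemma Walk.le_add_length_of_adj_le_succ (f : V → ℕ) (hf : ∀ u v, G.Adj u v → f v ≤ f u + 1)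
    {u v : V} (w : G.Walk u v) : f v ≤ f u + w.length := by
  induction w with
  | nil => simp
  | cons h w ih => rw [Walk.length_cons]; linarith [hf _ _ h]

lemma Reachable.le_add_dist_of_adj_le_succ (f : V → ℕ) (hf : ∀ u v, G.Adj u v → f v ≤ f u + 1)
    {u v : V} (h : G.Reachable u v) : f v ≤ f u + G.dist u v := by
  obtain ⟨w, hw⟩ := h.exists_walk_length_eq_dist
  exact hw ▸ w.le_add_length_of_adj_le_succ f hf

end SimpleGraph

namespace FatTreeVertex

variable {t m : ℕ}

open SimpleGraph

lemma adj_server_edge (i : Fin t) (p s : Fin m) :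
    (fatTreeGraph t m).Adj (.server i p s) (.edge i p) :=
  Or.inr ⟨rfl, rfl⟩

lemma adj_edge_agg (i : Fin t) (p j : Fin m) : (fatTreeGraph t m).Adj (.edge i p) (.agg i j) :=
  Or.inr rfl

lemma adj_agg_core (i : Fin t) (j : Fin m) (c : Fin (m * m)) (hc : (c : ℕ) / m = j) :
    (fatTreeGraph t m).Adj (.agg i j) (.core c) :=
  Or.inr hc

def walkToAgg (i : Fin t) (p s j : Fin m) : (fatTreeGraph t m).Walk (.server i p s) (.agg i j) :=
  .cons (adj_server_edge i p s) (adj_edge_agg i p j).toWalk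

def walkToCore (i : Fin t) (p s : Fin m) :
    (fatTreeGraph t m).Walk (.server i p s) (.core ⟨0, Nat.mul_pos p.pos p.pos⟩) :=
  (walkToAgg i p s ⟨0, p.pos⟩).concat (adj_agg_core i _ _ (Nat.zero_div m))

lemma reachable_server_server (i i' : Fin t) (p p' s s' : Fin m) :
    (fatTreeGraph t m).Reachable (.server i p s) (.server i' p' s') :=
  ⟨(walkToCore i p s).append (walkToCore i' p' s').reverse⟩

def distFromServer (i : Fin t) (p s : Fin m) : FatTreeVertex t m → ℕ
  | .server i' p' s' => if i = i' then if p = p' then if s = s' then 0 else 2 else 4 else 6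
  | .edge i' p' => if i = i' then if p = p' then 1 else 3 else 5
  | .agg i' _ => if i = i' then 2 else 4
  | .core _ => 3

lemma distFromServer_le_succ_of_adj (i : Fin t) (p s : Fin m) {u v : FatTreeVertex t m}
    (h : (fatTreeGraph t m).Adj u v) : distFromServer i p s v ≤ distFromServer i p s u + 1 := by
  cases u <;> cases v <;>
    simp only [fatTreeGraph, fatTreeLink, or_false, false_or, or_self] at h <;>
    simp only [distFromServer] <;> split_ifs <;> grind

lemma dist_server_server_le (i i' : Fin t) (p p' s s' : Fin m) :
    (fatTreeGraph t m).dist (.server i p s) (.server i' p' s') ≤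
      distFromServer i p s (.server i' p' s') := by
  simp only [distFromServer]
  split_ifs with hi hp hs
  · simp [hi, hp, hs]
  · subst hi hp
    exact dist_le (.cons (adj_server_edge i p s) (adj_server_edge i p s').symm.toWalk)
  · subst hi
    exact dist_le ((walkToAgg i p s p).append (walkToAgg i p' s' p).reverse)
  · exact dist_le ((walkToCore i p s).append (walkToCore i' p' s').reverse)

lemma dist_server_server (i i' : Fin t) (p p' s s' : Fin m) :
    (fatTreeGraph t m).dist (.server i p s) (.server i' p' s') =
      distFromServer i p s (.server i' p' s') := by
  refine le_antisymm (dist_server_server_le ..) ?_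
  simpa [distFromServer] using (reachable_server_server i i' p p' s s').le_add_dist_of_adj_le_succ
    (distFromServer i p s) fun _ _ ↦ distFromServer_le_succ_of_adj i p s

end FatTreeVertex

theorem stmt_10_general (t m : ℕ)
    (i i' : Fin t) (p p' s s' : Fin m)
    (hne : FatTreeVertex.server i p s ≠ FatTreeVertex.server (t := t) i' p' s') :
    ((fatTreeGraph t m).Reachable (.server i p s) (.server i' p' s')) ∧
    (i = i' → p = p' →
      (fatTreeGraph t m).dist (.server i p s) (.server i' p' s') = 2) ∧
    (i = i' → p ≠ p' →
      (fatTreeGraph t m).dist (.server i p s) (.server i' p' s') = 4) ∧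
    (i ≠ i' →
      (fatTreeGraph t m).dist (.server i p s) (.server i' p' s') = 6) := by
  simp only [FatTreeVertex.dist_server_server, FatTreeVertex.distFromServer]
  refine ⟨FatTreeVertex.reachable_server_server .., ?_, ?_, ?_⟩
  · rintro rfl rfl
    have hs : s ≠ s' := by rintro rfl; exact hne rfl
    simp [hs]
  · rintro rfl hp
    simp [hp]
  · intro hi
    simp [hi]

/-- In a `t`-ary fat-tree (`t = 2m ≥ 2`), any two distinct servers are connected by
a path through the switches; moreover the shortest path (graph distance) has length
2 if they lie under the same edge switch, 4 if they are in the same pod but under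
different edge switches, and 6 if they are in different pods. -/
theorem stmt_10 (t m : ℕ) (ht : t = 2 * m) (hm : 1 ≤ m)
    (i i' : Fin t) (p p' s s' : Fin m)
    (hne : FatTreeVertex.server i p s ≠ FatTreeVertex.server (t := t) i' p' s') :
    ((fatTreeGraph t m).Reachable (.server i p s) (.server i' p' s')) ∧
    (i = i' → p = p' →
      (fatTreeGraph t m).dist (.server i p s) (.server i' p' s') = 2) ∧
    (i = i' → p ≠ p' →
      (fatTreeGraph t m).dist (.server i p s) (.server i' p' s') = 4) ∧
    (i ≠ i' →
      (fatTreeGraph t m).dist (.server i p s) (.server i' p' s') = 6) :=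
  stmt_10_general t m i i' p p' s s' hne
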